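/- Let u ∈ End(V⊗V) be invertible and suppose u, v, w ∈ A ⊆ End(V⊗V) are such that the Yang–Baxter composition u*v is defined (meaning [[u, u*v, v]] = 0 with u*v the unique such solution up to scalar, and A is closed under inverses). Then (u*v)*v⁻¹ = u and u⁻¹*(u*v) = v, and (u*v)⁻¹ = v⁻¹*u⁻¹, in the sense that [[u*v, u, v⁻¹]] = 0, [[u⁻¹, v, u*v]] = 0, and [[v⁻¹, (u*v)⁻¹, u⁻¹]] = 0 respectively. -/
import Mathlib


open Matrix

/-- `u ⊗ 1` on `V ⊗ V ⊗ V`, where `u` is an endomorphism of `V ⊗ V`, `V = ℂⁿ`. -/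
noncomputable def tenL {n : ℕ} (u : Matrix (Fin n × Fin n) (Fin n × Fin n) ℂ) :
    Matrix (Fin n × Fin n × Fin n) (Fin n × Fin n × Fin n) ℂ :=
  Matrix.of fun p q => u (p.1, p.2.1) (q.1, q.2.1) * (if p.2.2 = q.2.2 then 1 else 0)

/-- `1 ⊗ u` on `V ⊗ V ⊗ V`. -/
noncomputable def tenR {n : ℕ} (u : Matrix (Fin n × Fin n) (Fin n × Fin n) ℂ) :
    Matrix (Fin n × Fin n × Fin n) (Fin n × Fin n × Fin n) ℂ :=
  Matrix.of fun p q => (if p.1 = q.1 then 1 else 0) * u (p.2.1, p.2.2) (q.2.1, q.2.2)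

/-- The Yang–Baxter commutator `[[u,w,v]] = (u⊗1)(1⊗w)(v⊗1) − (1⊗v)(w⊗1)(1⊗u)`. -/
noncomputable def ybc {n : ℕ} (u w v : Matrix (Fin n × Fin n) (Fin n × Fin n) ℂ) :
    Matrix (Fin n × Fin n × Fin n) (Fin n × Fin n × Fin n) ℂ :=
  tenL u * tenR w * tenL v - tenR v * tenL w * tenR u

lemma tenL_mul {n : ℕ} (a b : Matrix (Fin n × Fin n) (Fin n × Fin n) ℂ) :
    tenL (a * b) = tenL a * tenL b := by
  ext p q
  simp only [tenL, Matrix.mul_apply, Matrix.of_apply, Fintype.sum_prod_type]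
  simp [mul_ite, ite_mul, Finset.mul_sum, Finset.sum_mul, mul_comm, mul_left_comm]

lemma tenR_mul {n : ℕ} (a b : Matrix (Fin n × Fin n) (Fin n × Fin n) ℂ) :
    tenR (a * b) = tenR a * tenR b := by
  ext p q
  simp only [tenR, Matrix.mul_apply, Matrix.of_apply, Fintype.sum_prod_type]
  simp [mul_ite, ite_mul, Finset.mul_sum, Finset.sum_mul, mul_comm, mul_left_comm]

lemma tenL_one {n : ℕ} : tenL (1 : Matrix (Fin n × Fin n) (Fin n × Fin n) ℂ) = 1 := by
  ext p q
  simp only [tenL, Matrix.of_apply, Matrix.one_apply, Prod.ext_iff]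
  rcases p with ⟨p1, p2, p3⟩; rcases q with ⟨q1, q2, q3⟩
  by_cases h1 : p1 = q1 <;> by_cases h2 : p2 = q2 <;> by_cases h3 : p3 = q3 <;>
    simp [h1, h2, h3]

lemma tenR_one {n : ℕ} : tenR (1 : Matrix (Fin n × Fin n) (Fin n × Fin n) ℂ) = 1 := by
  ext p q
  simp only [tenR, Matrix.of_apply, Matrix.one_apply, Prod.ext_iff]
  rcases p with ⟨p1, p2, p3⟩; rcases q with ⟨q1, q2, q3⟩
  by_cases h1 : p1 = q1 <;> by_cases h2 : p2 = q2 <;> by_cases h3 : p3 = q3 <;>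
    simp [h1, h2, h3]

theorem stmt18 {n : ℕ} (u v w : Matrix (Fin n × Fin n) (Fin n × Fin n) ℂ)
    (hu : IsUnit u) (hv : IsUnit v) (hw : IsUnit w)
    (h : ybc u w v = 0) :
    ybc w u v⁻¹ = 0 ∧ ybc u⁻¹ v w = 0 ∧ ybc v⁻¹ w⁻¹ u⁻¹ = 0 := by
  have hud := (Matrix.isUnit_iff_isUnit_det u).mp hu
  have hvd := (Matrix.isUnit_iff_isUnit_det v).mp hv
  have hwd := (Matrix.isUnit_iff_isUnit_det w).mp hw
  -- cancellation facts
  have hLu : tenL u * tenL u⁻¹ = 1 := by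
    rw [← tenL_mul, Matrix.mul_nonsing_inv u hud, tenL_one]
  have hLu' : tenL u⁻¹ * tenL u = 1 := by
    rw [← tenL_mul, Matrix.nonsing_inv_mul u hud, tenL_one]
  have hLv : tenL v * tenL v⁻¹ = 1 := by
    rw [← tenL_mul, Matrix.mul_nonsing_inv v hvd, tenL_one]
  have hLv' : tenL v⁻¹ * tenL v = 1 := by
    rw [← tenL_mul, Matrix.nonsing_inv_mul v hvd, tenL_one]
  have hRu : tenR u * tenR u⁻¹ = 1 := by
    rw [← tenR_mul, Matrix.mul_nonsing_inv u hud, tenR_one]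
  have hRu' : tenR u⁻¹ * tenR u = 1 := by
    rw [← tenR_mul, Matrix.nonsing_inv_mul u hud, tenR_one]
  have hRv : tenR v * tenR v⁻¹ = 1 := by
    rw [← tenR_mul, Matrix.mul_nonsing_inv v hvd, tenR_one]
  have hRv' : tenR v⁻¹ * tenR v = 1 := by
    rw [← tenR_mul, Matrix.nonsing_inv_mul v hvd, tenR_one]
  have hLw : tenL w * tenL w⁻¹ = 1 := by
    rw [← tenL_mul, Matrix.mul_nonsing_inv w hwd, tenL_one]
  have hRw : tenR w * tenR w⁻¹ = 1 := by
    rw [← tenR_mul, Matrix.mul_nonsing_inv w hwd, tenR_one]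
  have he : tenL u * tenR w * tenL v = tenR v * tenL w * tenR u := by
    have := sub_eq_zero.mp h
    exact this
  have cRv : ∀ x, tenR v⁻¹ * (tenR v * x) = x := fun x => by
    rw [← Matrix.mul_assoc, hRv', Matrix.one_mul]
  have cLu : ∀ x, tenL u⁻¹ * (tenL u * x) = x := fun x => by
    rw [← Matrix.mul_assoc, hLu', Matrix.one_mul]
  refine ⟨?_, ?_, ?_⟩
  · -- ybc w u v⁻¹ = 0 :  Lw Ru Lv⁻¹ = Rv⁻¹ Lu Rw
    have := congrArg (fun X => tenR v⁻¹ * X * tenL v⁻¹) he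
    simp only [Matrix.mul_assoc, cRv, hLv, Matrix.mul_one] at this
    unfold ybc
    rw [sub_eq_zero, Matrix.mul_assoc, Matrix.mul_assoc, this]
  · -- ybc u⁻¹ v w = 0 :  Lu⁻¹ Rv Lw = Rw Lv Ru⁻¹
    have := congrArg (fun X => tenL u⁻¹ * X * tenR u⁻¹) he
    simp only [Matrix.mul_assoc, cLu, hRu, Matrix.mul_one] at this
    unfold ybc
    rw [sub_eq_zero, Matrix.mul_assoc, Matrix.mul_assoc, this]
  · -- ybc v⁻¹ w⁻¹ u⁻¹ = 0 :  Lv⁻¹ Rw⁻¹ Lu⁻¹ = Ru⁻¹ Lw⁻¹ Rv⁻¹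
    have iLu : (tenL u)⁻¹ = tenL u⁻¹ := Matrix.inv_eq_right_inv hLu
    have iLv : (tenL v)⁻¹ = tenL v⁻¹ := Matrix.inv_eq_right_inv hLv
    have iLw : (tenL w)⁻¹ = tenL w⁻¹ := Matrix.inv_eq_right_inv hLw
    have iRu : (tenR u)⁻¹ = tenR u⁻¹ := Matrix.inv_eq_right_inv hRu
    have iRv : (tenR v)⁻¹ = tenR v⁻¹ := Matrix.inv_eq_right_inv hRv
    have iRw : (tenR w)⁻¹ = tenR w⁻¹ := Matrix.inv_eq_right_inv hRw
    have := congrArg (fun X => X⁻¹) he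
    simp only [Matrix.mul_inv_rev, iLu, iLv, iLw, iRu, iRv, iRw] at this
    unfold ybc
    rw [sub_eq_zero, Matrix.mul_assoc, Matrix.mul_assoc, this]
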